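/- arXiv:2005.02484 — 2 statements merged into one kernel-verified Lean document; each statement's English description precedes it below -/
import Mathlib

section
/- Let (X,T) be a TDS. The Feldman–Katok function ρ_FK is a pseudometric on X: for all x,y,z ∈ X one has ρ_FK(x,x) = 0, ρ_FK(x,y) = ρ_FK(y,x), and ρ_FK(x,z) ≤ ρ_FK(x,y) + ρ_FK(y,z). -/
/-!
Matches compose through the orbit of the middle point: an `(n,δ₁)`-match of `x` and `y` and an
`(n,δ₂)`-match of `y` and `z` use two subsets of `{0,…,n-1}` along the orbit of `y`, of sizes `k₁`
and `k₂`, which therefore share at least `k₁ + k₂ - n` times. Chaining the two matches through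
these shared times gives an `(n,δ₁+δ₂)`-match of `x` and `z`, so
`f̄_{n,δ₁+δ₂}(x,z) ≤ f̄_{n,δ₁}(x,y) + f̄_{n,δ₂}(y,z)`; passing to the `limsup` and then to the
infimum over admissible radii yields the triangle inequality for `ρ_FK`. Reflexivity comes from the
identity match and symmetry from inverting a match.
-/

open Filter Topology MeasureTheory Set

namespace FKPaper

variable {X : Type*} [MetricSpace X]

/-- The maximal fit of an `(n,δ)`-match between the orbits of `x` and `z` under `T`:
the largest cardinality of the domain of an order-preserving bijection
`π : D → R`, with `D, R ⊆ {0,…,n-1}` and `dist (T^[i] x) (T^[π i] z) < δ` for `i ∈ D`. -/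
noncomputable def maxFit (T : X → X) (δ : ℝ) (n : ℕ) (x z : X) : ℕ :=
  sSup {k : ℕ | ∃ i j : Fin k → ℕ, StrictMono i ∧ StrictMono j ∧
    (∀ s, i s < n) ∧ (∀ s, j s < n) ∧ ∀ s, dist (T^[i s] x) (T^[j s] z) < δ}

/-- `f̄_{n,δ}(x,z) = 1 - (maximal fit of an (n,δ)-match of x and z)/n`. -/
noncomputable def fbarN (T : X → X) (δ : ℝ) (n : ℕ) (x z : X) : ℝ :=
  1 - (maxFit T δ n x z : ℝ) / n

/-- `f̄_δ(x,z) = limsup_{n→∞} f̄_{n,δ}(x,z)`. -/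
noncomputable def fbar (T : X → X) (δ : ℝ) (x z : X) : ℝ :=
  Filter.limsup (fun n => fbarN T δ n x z) Filter.atTop

/-- The Feldman–Katok pseudometric `ρ_FK(x,z) = inf {δ > 0 : f̄_δ(x,z) < δ}`. -/
noncomputable def rhoFK (T : X → X) (x z : X) : ℝ :=
  sInf {δ : ℝ | 0 < δ ∧ fbar T δ x z < δ}

end FKPaper

open scoped Finset Pointwise

theorem StrictMono.exists_strictMono_comp_eq_of_range_subset {α β γ : Type*} [LinearOrder α]
    [Preorder β] [Preorder γ] {i : α → β} (hi : StrictMono i) {f : γ → β} (hf : StrictMono f)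
    (hfi : Set.range f ⊆ Set.range i) : ∃ g : γ → α, StrictMono g ∧ i ∘ g = f := by
  choose g hg using fun c => hfi (Set.mem_range_self c)
  refine ⟨g, fun a b hab => hi.lt_iff_lt.mp ?_, funext hg⟩
  rw [hg, hg]
  exact hf hab

lemma Finset.card_image_univ_of_strictMono {k : ℕ} {i : Fin k → ℕ} (hi : StrictMono i) :
    #(Finset.univ.image i) = k := by
  simp [card_image_of_injective _ hi.injective]

lemma Finset.image_univ_subset_range {k n : ℕ} {i : Fin k → ℕ} (hin : ∀ s, i s < n) :
    Finset.univ.image i ⊆ range n := by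
  simpa [subset_iff] using hin

namespace FKPaper

variable {X : Type*} [MetricSpace X]

def fitSet (T : X → X) (δ : ℝ) (n : ℕ) (x z : X) : Set ℕ :=
  {k : ℕ | ∃ i j : Fin k → ℕ, StrictMono i ∧ StrictMono j ∧
    (∀ s, i s < n) ∧ (∀ s, j s < n) ∧ ∀ s, dist (T^[i s] x) (T^[j s] z) < δ}

section Fits

variable {T : X → X} {δ : ℝ} {n k : ℕ} {x z : X}

lemma maxFit_eq_sSup_fitSet : maxFit T δ n x z = sSup (fitSet T δ n x z) := rfl

lemma zero_mem_fitSet : 0 ∈ fitSet T δ n x z :=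
  ⟨Fin.elim0, Fin.elim0, fun s => s.elim0, fun s => s.elim0,
    fun s => s.elim0, fun s => s.elim0, fun s => s.elim0⟩

lemma le_of_mem_fitSet (hk : k ∈ fitSet T δ n x z) : k ≤ n := by
  obtain ⟨i, -, hi, -, hin, -⟩ := hk
  simpa [Finset.card_image_univ_of_strictMono hi] using
    Finset.card_le_card (Finset.image_univ_subset_range hin)

lemma bddAbove_fitSet : BddAbove (fitSet T δ n x z) := ⟨n, fun _ => le_of_mem_fitSet⟩

lemma maxFit_mem_fitSet : maxFit T δ n x z ∈ fitSet T δ n x z :=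
  Nat.sSup_mem ⟨0, zero_mem_fitSet⟩ bddAbove_fitSet

lemma le_maxFit (hk : k ∈ fitSet T δ n x z) : k ≤ maxFit T δ n x z :=
  le_csSup bddAbove_fitSet hk

lemma maxFit_le : maxFit T δ n x z ≤ n := le_of_mem_fitSet maxFit_mem_fitSet

lemma fitSet_comm : fitSet T δ n x z = fitSet T δ n z x := by
  have swap : ∀ a b : X, fitSet T δ n a b ⊆ fitSet T δ n b a := by
    rintro a b k ⟨i, j, hi, hj, hin, hjn, hd⟩
    exact ⟨j, i, hj, hi, hjn, hin, fun s => dist_comm (T^[i s] a) _ ▸ hd s⟩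
  exact (swap x z).antisymm (swap z x)

lemma maxFit_comm : maxFit T δ n x z = maxFit T δ n z x := by
  rw [maxFit_eq_sSup_fitSet, maxFit_eq_sSup_fitSet, fitSet_comm]

lemma maxFit_self (hδ : 0 < δ) : maxFit T δ n x x = n :=
  maxFit_le.antisymm <| le_maxFit ⟨Fin.val, Fin.val, Fin.val_strictMono, Fin.val_strictMono,
    Fin.isLt, Fin.isLt, fun s => by rwa [dist_self]⟩

lemma exists_mem_fitSet_add_le_add {δ₁ δ₂ : ℝ} {y : X} {k₁ k₂ : ℕ}
    (h₁ : k₁ ∈ fitSet T δ₁ n x y) (h₂ : k₂ ∈ fitSet T δ₂ n y z) :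
    ∃ k ∈ fitSet T (δ₁ + δ₂) n x z, k₁ + k₂ ≤ n + k := by
  obtain ⟨i₁, j₁, hi₁, hj₁, hi₁n, hj₁n, hd₁⟩ := h₁
  obtain ⟨i₂, j₂, hi₂, hj₂, hi₂n, hj₂n, hd₂⟩ := h₂
  set A := Finset.univ.image j₁
  set B := Finset.univ.image i₂
  -- `A ∩ B` are the times along the orbit of `y` used by both matches
  have hAB : Set.range ((A ∩ B).orderEmbOfFin rfl) = Set.range j₁ ∩ Set.range i₂ := by
    simp [A, B]
  obtain ⟨g₁, hg₁, hj₁g₁⟩ := hj₁.exists_strictMono_comp_eq_of_range_subset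
    ((A ∩ B).orderEmbOfFin rfl).strictMono (hAB ▸ Set.inter_subset_left)
  obtain ⟨g₂, hg₂, hi₂g₂⟩ := hi₂.exists_strictMono_comp_eq_of_range_subset
    ((A ∩ B).orderEmbOfFin rfl).strictMono (hAB ▸ Set.inter_subset_right)
  refine ⟨#(A ∩ B), ⟨i₁ ∘ g₁, j₂ ∘ g₂, hi₁.comp hg₁, hj₂.comp hg₂, fun s => hi₁n _,
    fun s => hj₂n _, fun s => ?_⟩, ?_⟩
  · have hmid : j₁ (g₁ s) = i₂ (g₂ s) := (congrFun hj₁g₁ s).trans (congrFun hi₂g₂ s).symm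
    calc dist (T^[i₁ (g₁ s)] x) (T^[j₂ (g₂ s)] z)
        ≤ dist (T^[i₁ (g₁ s)] x) (T^[j₁ (g₁ s)] y) + dist (T^[i₂ (g₂ s)] y) (T^[j₂ (g₂ s)] z) :=
          hmid ▸ dist_triangle _ _ _
      _ < δ₁ + δ₂ := add_lt_add (hd₁ _) (hd₂ _)
  · have hunion : #(A ∪ B) ≤ n := by
      simpa using Finset.card_le_card
        (Finset.union_subset (Finset.image_univ_subset_range hj₁n)
          (Finset.image_univ_subset_range hi₂n))
    calc k₁ + k₂ = #(A ∪ B) + #(A ∩ B) := by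
          rw [Finset.card_union_add_card_inter, Finset.card_image_univ_of_strictMono hj₁,
            Finset.card_image_univ_of_strictMono hi₂]
      _ ≤ n + #(A ∩ B) := by gcongr

lemma maxFit_add_maxFit_le {δ₁ δ₂ : ℝ} {y : X} :
    maxFit T δ₁ n x y + maxFit T δ₂ n y z ≤ n + maxFit T (δ₁ + δ₂) n x z := by
  obtain ⟨k, hk, hle⟩ := exists_mem_fitSet_add_le_add (maxFit_mem_fitSet (x := x) (z := y))
    (maxFit_mem_fitSet (x := y) (z := z))
  exact hle.trans (Nat.add_le_add_left (le_maxFit hk) n)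

end Fits

section FiniteHorizon

variable (T : X → X) (δ : ℝ) (n : ℕ) (x y z : X)

lemma fbarN_nonneg : 0 ≤ fbarN T δ n x z := by
  rw [fbarN, sub_nonneg]
  exact div_le_one_of_le₀ (mod_cast maxFit_le) n.cast_nonneg

lemma fbarN_le_one : fbarN T δ n x z ≤ 1 :=
  sub_le_self _ (by positivity)

lemma fbarN_comm : fbarN T δ n x z = fbarN T δ n z x := by
  rw [fbarN, fbarN, maxFit_comm]

lemma fbarN_self (hδ : 0 < δ) (hn : n ≠ 0) : fbarN T δ n x x = 0 := by
  rw [fbarN, maxFit_self hδ, div_self (Nat.cast_ne_zero.mpr hn), sub_self]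

lemma fbarN_add_le (δ₁ δ₂ : ℝ) :
    fbarN T (δ₁ + δ₂) n x z ≤ fbarN T δ₁ n x y + fbarN T δ₂ n y z := by
  rcases n.eq_zero_or_pos with rfl | hn
  · simp [fbarN]
  have hfit : (maxFit T δ₁ n x y : ℝ) + maxFit T δ₂ n y z ≤ n + maxFit T (δ₁ + δ₂) n x z := by
    exact_mod_cast maxFit_add_maxFit_le
  have hn' : (0 : ℝ) < n := Nat.cast_pos.mpr hn
  have hdiv : (maxFit T δ₁ n x y : ℝ) / n + maxFit T δ₂ n y z / n
      ≤ 1 + maxFit T (δ₁ + δ₂) n x z / n := by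
    rw [← add_div, one_add_div hn'.ne']
    gcongr
  simp only [fbarN]
  linarith

end FiniteHorizon

section Limsup

variable (T : X → X) (δ : ℝ) (x y z : X)

lemma isBoundedUnder_le_fbarN :
    IsBoundedUnder (· ≤ ·) atTop (fun n => fbarN T δ n x z) :=
  isBoundedUnder_of ⟨1, fun n => fbarN_le_one T δ n x z⟩

lemma isBoundedUnder_ge_fbarN :
    IsBoundedUnder (· ≥ ·) atTop (fun n => fbarN T δ n x z) :=
  isBoundedUnder_of ⟨0, fun n => fbarN_nonneg T δ n x z⟩

lemma fbar_le_one : fbar T δ x z ≤ 1 :=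
  limsup_le_of_le (isBoundedUnder_ge_fbarN T δ x z).isCoboundedUnder_le
    (Eventually.of_forall fun n => fbarN_le_one T δ n x z)

lemma fbar_comm : fbar T δ x z = fbar T δ z x := by
  simp only [fbar, fbarN_comm T δ _ x z]

lemma fbar_self (hδ : 0 < δ) : fbar T δ x x = 0 := by
  have h : (fun n => fbarN T δ n x x) =ᶠ[atTop] fun _ => 0 := by
    filter_upwards [eventually_ne_atTop 0] with n hn using fbarN_self T δ n x hδ hn
  rw [fbar, limsup_congr h, limsup_const]

lemma fbar_add_le (δ₁ δ₂ : ℝ) :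
    fbar T (δ₁ + δ₂) x z ≤ fbar T δ₁ x y + fbar T δ₂ y z :=
  calc fbar T (δ₁ + δ₂) x z
      ≤ limsup ((fun n => fbarN T δ₁ n x y) + fun n => fbarN T δ₂ n y z) atTop :=
        limsup_le_limsup (Eventually.of_forall fun n => fbarN_add_le T n x y z δ₁ δ₂)
          (isBoundedUnder_ge_fbarN T _ x z).isCoboundedUnder_le
          (isBoundedUnder_le_add (isBoundedUnder_le_fbarN T δ₁ x y)
            (isBoundedUnder_le_fbarN T δ₂ y z))
    _ ≤ fbar T δ₁ x y + fbar T δ₂ y z :=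
        limsup_add_le (isBoundedUnder_ge_fbarN T δ₁ x y) (isBoundedUnder_le_fbarN T δ₁ x y)
          (isBoundedUnder_ge_fbarN T δ₂ y z).isCoboundedUnder_le (isBoundedUnder_le_fbarN T δ₂ y z)

end Limsup

def admissibleRadii (T : X → X) (x z : X) : Set ℝ := {δ | 0 < δ ∧ fbar T δ x z < δ}

section Radii

variable (T : X → X) (x y z : X)

lemma rhoFK_eq_sInf_admissibleRadii : rhoFK T x z = sInf (admissibleRadii T x z) := rfl

lemma two_mem_admissibleRadii : 2 ∈ admissibleRadii T x z :=
  ⟨two_pos, (fbar_le_one T 2 x z).trans_lt one_lt_two⟩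

lemma bddBelow_admissibleRadii : BddBelow (admissibleRadii T x z) :=
  ⟨0, fun _ hδ => hδ.1.le⟩

lemma admissibleRadii_self : admissibleRadii T x x = Ioi 0 := by
  ext δ
  exact ⟨And.left, fun hδ => ⟨hδ, (fbar_self T δ x hδ).symm ▸ hδ⟩⟩

lemma admissibleRadii_comm : admissibleRadii T x z = admissibleRadii T z x := by
  simp only [admissibleRadii, fbar_comm T _ x z]

lemma admissibleRadii_add_subset :
    admissibleRadii T x y + admissibleRadii T y z ⊆ admissibleRadii T x z := by
  rintro _ ⟨δ₁, ⟨hδ₁, hf₁⟩, δ₂, ⟨hδ₂, hf₂⟩, rfl⟩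
  exact ⟨add_pos hδ₁ hδ₂, (fbar_add_le T x y z δ₁ δ₂).trans_lt (add_lt_add hf₁ hf₂)⟩

lemma rhoFK_self : rhoFK T x x = 0 := by
  rw [rhoFK_eq_sInf_admissibleRadii, admissibleRadii_self, csInf_Ioi]

lemma rhoFK_comm : rhoFK T x z = rhoFK T z x := by
  rw [rhoFK_eq_sInf_admissibleRadii, admissibleRadii_comm, rhoFK_eq_sInf_admissibleRadii]

lemma rhoFK_triangle : rhoFK T x z ≤ rhoFK T x y + rhoFK T y z := by
  simp only [rhoFK_eq_sInf_admissibleRadii]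
  rw [← csInf_add ⟨2, two_mem_admissibleRadii T x y⟩ (bddBelow_admissibleRadii T x y)
    ⟨2, two_mem_admissibleRadii T y z⟩ (bddBelow_admissibleRadii T y z)]
  exact csInf_le_csInf (bddBelow_admissibleRadii T x z)
    ⟨_, Set.add_mem_add (two_mem_admissibleRadii T x y) (two_mem_admissibleRadii T y z)⟩
    (admissibleRadii_add_subset T x y z)

end Radii

end FKPaper

open FKPaper Filter Topology MeasureTheory Set

theorem rhoFK_pseudometric_general {X : Type*} [MetricSpace X]
    (T : X → X) :
    (∀ x : X, rhoFK T x x = 0) ∧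
    (∀ x y : X, rhoFK T x y = rhoFK T y x) ∧
    (∀ x y z : X, rhoFK T x z ≤ rhoFK T x y + rhoFK T y z) :=
  ⟨rhoFK_self T, rhoFK_comm T, rhoFK_triangle T⟩

/-- `ρ_FK` is a pseudometric on `X`. -/
theorem rhoFK_pseudometric {X : Type*} [MetricSpace X] [CompactSpace X] [Nonempty X]
    (T : X → X) (hT : Continuous T) :
    (∀ x : X, rhoFK T x x = 0) ∧
    (∀ x y : X, rhoFK T x y = rhoFK T y x) ∧
    (∀ x y z : X, rhoFK T x z ≤ rhoFK T x y + rhoFK T y z) :=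
  rhoFK_pseudometric_general T
end

section
/- Let (X,T) be a TDS. If there exist two distinct T-invariant ergodic Borel probability measures on X, each with full support, then (X,T) is mean sensitive. -/
open Filter Topology MeasureTheory Set

namespace FKPaper

variable {X : Type*} [MetricSpace X]

/-- The Besicovitch pseudometric
`ρ_B(x,z) = limsup_{n→∞} (1/n) ∑_{j<n} d(Tʲx,Tʲz)`. -/
noncomputable def rhoB (T : X → X) (x z : X) : ℝ :=
  Filter.limsup
    (fun n => (∑ j ∈ Finset.range n, dist (T^[j] x) (T^[j] z)) / n) Filter.atTop

/-- Mean sensitivity (with respect to the Besicovitch pseudometric). -/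
def MeanSensitive (T : X → X) : Prop :=
  ∃ ε > 0, ∀ U : Set X, IsOpen U → U.Nonempty →
    ∃ x ∈ U, ∃ y ∈ U, ε < rhoB T x y

end FKPaper

open FKPaper Filter Topology MeasureTheory Set

/-! Since `μ ≠ ν`, some Lipschitz function `f` has `∫ f ∂μ ≠ ∫ f ∂ν`. By von Neumann's mean ergodic
theorem the Birkhoff averages `Aₙ f` converge in measure to `∫ f ∂μ` and to `∫ f ∂ν`, hence almost
everywhere along one common subsequence. As both measures have full support, every nonempty open `U`
contains a point `x` generic for `μ` and a point `y` generic for `ν` along that subsequence, and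
`|Aₙ f x - Aₙ f y| ≤ K · (1/n) ∑_{j<n} d(Tʲx, Tʲy)` bounds `ρ_B(x, y)` below by
`|∫ f ∂μ - ∫ f ∂ν| / K`. -/

open scoped NNReal

namespace MeasureTheory

theorem exists_lipschitzWith_integral_ne {X : Type*} [PseudoMetricSpace X] [MeasurableSpace X]
    [BorelSpace X] {μ ν : Measure X} [IsFiniteMeasure μ] [IsFiniteMeasure ν] (h : μ ≠ ν) :
    ∃ (K : ℝ≥0) (f : X → ℝ), LipschitzWith K f ∧ ∫ x, f x ∂μ ≠ ∫ x, f x ∂ν := by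
  contrapose! h
  have hδ (n : ℕ) : (0 : ℝ) < 1 / (n + 1) := Nat.one_div_pos_of_nat
  have h_closed (F : Set X) (hF : IsClosed F) : μ F = ν F := by
    have h_lim (ρ : Measure X) [IsFiniteMeasure ρ] := tendsto_integral_thickenedIndicator_of_isClosed
      ρ hF hδ tendsto_one_div_add_atTop_nhds_zero_nat
    refine (measureReal_eq_measureReal_iff (measure_ne_top μ F) (measure_ne_top ν F)).1 ?_
    refine tendsto_nhds_unique ((h_lim μ).congr fun n ↦ h _ _
      ((LipschitzWith.subtype_val _).comp (lipschitzWith_thickenedIndicator (hδ n) F))) (h_lim ν)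
  exact ext_of_generate_finite _ (BorelSpace.measurable_eq.trans borel_eq_generateFrom_isClosed)
    isPiSystem_isClosed h_closed (h_closed _ isClosed_univ)

theorem TendstoInMeasure.exists_seq_tendsto_ae₂ {α E : Type*} [MeasurableSpace α]
    [PseudoEMetricSpace E] {μ ν : Measure α} {f : ℕ → α → E} {g g' : α → E}
    (hμ : TendstoInMeasure μ f atTop g) (hν : TendstoInMeasure ν f atTop g') :
    ∃ ns : ℕ → ℕ, StrictMono ns ∧ (∀ᵐ x ∂μ, Tendsto (fun i ↦ f (ns i) x) atTop (𝓝 (g x))) ∧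
      ∀ᵐ x ∂ν, Tendsto (fun i ↦ f (ns i) x) atTop (𝓝 (g' x)) := by
  obtain ⟨ns₁, hns₁, hμ₁⟩ := hμ.exists_seq_tendsto_ae
  obtain ⟨ns₂, hns₂, hν₂⟩ := (hν.comp hns₁.tendsto_atTop).exists_seq_tendsto_ae
  refine ⟨ns₁ ∘ ns₂, hns₁.comp hns₂, ?_, hν₂⟩
  filter_upwards [hμ₁] with x hx using hx.comp hns₂.tendsto_atTop

namespace Lp

variable {α E : Type*} [MeasurableSpace α] {μ : Measure α} [NormedAddCommGroup E] {p : ENNReal}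
  {T : α → α}

theorem coeFn_birkhoffSum_compMeasurePreserving (hT : MeasurePreserving T μ μ) (g : Lp E p μ)
    (n : ℕ) : ⇑(birkhoffSum (compMeasurePreserving T hT) id n g) =ᵐ[μ] birkhoffSum T g n := by
  induction n with
  | zero => simpa using coeFn_zero E p μ
  | succ n ih =>
    have h_iter : ⇑((compMeasurePreserving T hT)^[n] g) =ᵐ[μ] g ∘ T^[n] := by
      rw [compMeasurePreserving_iterate]
      exact coeFn_compMeasurePreserving _ _
    filter_upwards [coeFn_add (birkhoffSum (compMeasurePreserving T hT) id n g)
      ((compMeasurePreserving T hT)^[n] g), ih, h_iter] with x h_add h_sum h_x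
    simp only [birkhoffSum_succ, id, h_add, Pi.add_apply, h_sum, h_x, Function.comp]

theorem coeFn_birkhoffAverage_compMeasurePreserving [NormedSpace ℝ E]
    (hT : MeasurePreserving T μ μ) (g : Lp E p μ) (n : ℕ) :
    ⇑(birkhoffAverage ℝ (compMeasurePreserving T hT) id n g) =ᵐ[μ] birkhoffAverage ℝ T g n :=
  (coeFn_smul _ _).trans ((coeFn_birkhoffSum_compMeasurePreserving hT g n).const_smul _)

end Lp

end MeasureTheory

/-- Von Neumann's mean ergodic theorem: the averages converge in `L²` to the projection of `f`
onto the Koopman-invariant functions, which by ergodicity are the constants. -/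
theorem Ergodic.tendstoInMeasure_birkhoffAverage {α : Type*} [MeasurableSpace α] {μ : Measure α}
    [IsProbabilityMeasure μ] {T : α → α} (hT : Ergodic T μ) {f : α → ℝ} (hf : MemLp f 2 μ) :
    TendstoInMeasure μ (birkhoffAverage ℝ T f) atTop (fun _ ↦ ∫ x, f x ∂μ) := by
  set K := (Lp.compMeasurePreservingₗᵢ ℝ T hT.toMeasurePreserving :
    Lp ℝ 2 μ →ₗᵢ[ℝ] Lp ℝ 2 μ).toContinuousLinearMap
  set S := K.eqLocus (1 : Lp ℝ 2 μ →L[ℝ] Lp ℝ 2 μ)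
  set Q : S := S.orthogonalProjectionOnto (hf.toLp f)
  have h_lim := K.tendsto_birkhoffAverage_orthogonalProjection
    (LinearIsometry.norm_toContinuousLinearMap_le _) (hf.toLp f)
  have hQ_inv : (Q : Lp ℝ 2 μ) ∘ T =ᵐ[μ] Q := by
    have hQ := Lp.coeFn_compMeasurePreserving (Q : Lp ℝ 2 μ) hT.toMeasurePreserving
    rw [show Lp.compMeasurePreserving T _ (Q : Lp ℝ 2 μ) = (Q : Lp ℝ 2 μ) from Q.2] at hQ
    exact hQ.symm
  obtain ⟨c, hc⟩ := hT.ae_eq_const_of_ae_eq_comp_ae (Lp.aestronglyMeasurable _) hQ_inv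
  set one := indicatorConstLp 2 MeasurableSet.univ (measure_ne_top μ univ) (1 : ℝ)
  have h_one : one ∈ S := rfl
  have hc_eq : c = ∫ x, f x ∂μ := calc
    c = ∫ x, (Q : Lp ℝ 2 μ) x ∂μ := by simp [integral_congr_ae hc]
    _ = inner ℝ one (Q : Lp ℝ 2 μ) := by rw [L2.inner_indicatorConstLp_one, setIntegral_univ]
    _ = inner ℝ one (hf.toLp f) := S.inner_orthogonalProjectionOnto_eq_of_mem_left ⟨one, h_one⟩ _
    _ = ∫ x, f x ∂μ := by
      rw [L2.inner_indicatorConstLp_one, setIntegral_univ, integral_congr_ae hf.coeFn_toLp]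
  refine (tendstoInMeasure_of_tendsto_Lp h_lim).congr (fun n ↦ ?_) (hc_eq ▸ hc)
  exact (Lp.coeFn_birkhoffAverage_compMeasurePreserving _ _ n).trans
    (hT.quasiMeasurePreserving.birkhoffAverage_ae_eq_of_ae_eq ℝ hf.coeFn_toLp n)

theorem LipschitzWith.dist_birkhoffAverage_le {X : Type*} [PseudoMetricSpace X] {K : ℝ≥0}
    {f : X → ℝ} (hf : LipschitzWith K f) (T : X → X) (n : ℕ) (x y : X) :
    dist (birkhoffAverage ℝ T f n x) (birkhoffAverage ℝ T f n y) ≤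
      K * ((∑ j ∈ Finset.range n, dist (T^[j] x) (T^[j] y)) / n) := by
  simp only [birkhoffAverage, birkhoffSum, smul_eq_mul, dist_eq_norm, ← mul_sub,
    ← Finset.sum_sub_distrib, norm_mul, norm_inv, Real.norm_natCast]
  rw [mul_div_assoc', inv_mul_eq_div, Finset.mul_sum]
  gcongr
  refine (norm_sum_le _ _).trans (Finset.sum_le_sum fun j _ ↦ ?_)
  rw [← dist_eq_norm]
  exact hf.dist_le_mul _ _

namespace FKPaper

variable {X : Type*} [MetricSpace X] [BoundedSpace X] {T : X → X} {x y : X}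

theorem le_rhoB_of_frequently_le {r : ℝ}
    (h : ∃ᶠ n in atTop, r ≤ (∑ j ∈ Finset.range n, dist (T^[j] x) (T^[j] y)) / n) :
    r ≤ rhoB T x y := by
  refine le_limsup_of_frequently_le h (isBoundedUnder_of ⟨Metric.diam (univ : Set X), fun n ↦ ?_⟩)
  have h_diam (j : ℕ) : dist (T^[j] x) (T^[j] y) ≤ Metric.diam (univ : Set X) :=
    Metric.dist_le_diam_of_mem BoundedSpace.bounded_univ (mem_univ _) (mem_univ _)
  refine div_le_of_le_mul₀ n.cast_nonneg Metric.diam_nonneg ?_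
  simpa [mul_comm] using Finset.sum_le_sum fun j (_ : j ∈ Finset.range n) ↦ h_diam j

theorem div_le_rhoB_of_tendsto_birkhoffAverage {K : ℝ≥0} {f : X → ℝ} (hf : LipschitzWith K f)
    {ns : ℕ → ℕ} (hns : StrictMono ns) {a b : ℝ}
    (hx : Tendsto (fun i ↦ birkhoffAverage ℝ T f (ns i) x) atTop (𝓝 a))
    (hy : Tendsto (fun i ↦ birkhoffAverage ℝ T f (ns i) y) atTop (𝓝 b)) :
    dist a b / K ≤ rhoB T x y := by
  refine le_of_forall_lt_imp_le_of_dense fun r hr ↦ le_rhoB_of_frequently_le ?_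
  have h_ev := ((hx.dist hy).div_const (K : ℝ)).eventually (lt_mem_nhds hr)
  refine hns.tendsto_atTop.frequently (h_ev.mono fun i hi ↦ hi.le.trans ?_).frequently
  exact div_le_of_le_mul₀ K.coe_nonneg (by positivity)
    (by simpa [mul_comm] using hf.dist_birkhoffAverage_le T (ns i) x y)

end FKPaper

theorem meanSensitive_of_two_fully_supported_ergodic_general {X : Type*} [MetricSpace X] [CompactSpace X]
    (T : X → X) [MeasurableSpace X] [BorelSpace X]
    (μ ν : Measure X) [IsProbabilityMeasure μ] [IsProbabilityMeasure ν]
    (hμ : Ergodic T μ) (hν : Ergodic T ν)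
    (hμsupp : ∀ U : Set X, IsOpen U → U.Nonempty → 0 < μ U)
    (hνsupp : ∀ U : Set X, IsOpen U → U.Nonempty → 0 < ν U)
    (hne : μ ≠ ν) :
    MeanSensitive T := by
  obtain ⟨K, f, hf, hf_ne⟩ := exists_lipschitzWith_integral_ne hne
  have hf' : LipschitzWith (K + 1) f := hf.weaken (le_add_of_nonneg_right zero_le_one)
  have hf_memLp (ρ : Measure X) [IsFiniteMeasure ρ] : MemLp f 2 ρ :=
    hf.continuous.memLp_of_hasCompactSupport (HasCompactSupport.of_compactSpace f)
  obtain ⟨ns, hns, hμ_gen, hν_gen⟩ :=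
    (hμ.tendstoInMeasure_birkhoffAverage (hf_memLp μ)).exists_seq_tendsto_ae₂
      (hν.tendstoInMeasure_birkhoffAverage (hf_memLp ν))
  set c := dist (∫ x, f x ∂μ) (∫ x, f x ∂ν)
  have hc : 0 < c := dist_pos.2 hf_ne
  refine ⟨c / (2 * (K + 1)), by positivity, fun U hU hU_ne ↦ ?_⟩
  obtain ⟨x, hxU, hx⟩ :=
    Measure.exists_mem_of_measure_ne_zero_of_ae (hμsupp U hU hU_ne).ne' (ae_restrict_of_ae hμ_gen)
  obtain ⟨y, hyU, hy⟩ :=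
    Measure.exists_mem_of_measure_ne_zero_of_ae (hνsupp U hU hU_ne).ne' (ae_restrict_of_ae hν_gen)
  refine ⟨x, hxU, y, hyU, ?_⟩
  calc c / (2 * (K + 1)) < c / (K + 1) := by gcongr; linarith
    _ ≤ rhoB T x y := by simpa using div_le_rhoB_of_tendsto_birkhoffAverage hf' hns hx hy

/-- two distinct fully supported ergodic invariant measures force
mean sensitivity. -/
theorem meanSensitive_of_two_fully_supported_ergodic {X : Type*} [MetricSpace X] [CompactSpace X] [Nonempty X]
    (T : X → X) (hT : Continuous T) [MeasurableSpace X] [BorelSpace X]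
    (μ ν : Measure X) [IsProbabilityMeasure μ] [IsProbabilityMeasure ν]
    (hμ : Ergodic T μ) (hν : Ergodic T ν)
    (hμsupp : ∀ U : Set X, IsOpen U → U.Nonempty → 0 < μ U)
    (hνsupp : ∀ U : Set X, IsOpen U → U.Nonempty → 0 < ν U)
    (hne : μ ≠ ν) :
    MeanSensitive T :=
  meanSensitive_of_two_fully_supported_ergodic_general T μ ν hμ hν hμsupp hνsupp hne
end
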